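/- Monotonicity in the right-hand side: if f, g ∈ L²(X,m) with 0 ≤ f ≤ g, then w_{Ω,a,f} ≤ w_{Ω,a,g} m-a.e. on X. -/

import Mathlib

open MeasureTheory Filter
open scoped ENNReal

namespace AbsSob

variable {X : Type*} [MeasurableSpace X]

/-- Abstract Sobolev setting: a Riesz subspace `H` of `L²(X,m)` with the Stone
property (H1)-(H2), together with a gradient-like map `D` satisfying (D1)-(D4). -/
structure Setting (X : Type*) [MeasurableSpace X] (m : Measure X) where
  H : Set (X → ℝ)
  D : (X → ℝ) → X → ℝ
  zero_mem : (fun _ => (0 : ℝ)) ∈ H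
  add_mem : ∀ ⦃u v : X → ℝ⦄, u ∈ H → v ∈ H → u + v ∈ H
  smul_mem : ∀ (c : ℝ) ⦃u : X → ℝ⦄, u ∈ H → c • u ∈ H
  sup_mem : ∀ ⦃u v : X → ℝ⦄, u ∈ H → v ∈ H → u ⊔ v ∈ H
  inf_mem : ∀ ⦃u v : X → ℝ⦄, u ∈ H → v ∈ H → u ⊓ v ∈ H
  stone : ∀ ⦃u : X → ℝ⦄, u ∈ H → u ⊓ 1 ∈ H
  memL2 : ∀ ⦃u : X → ℝ⦄, u ∈ H → MemLp u 2 m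
  gradL2 : ∀ ⦃u : X → ℝ⦄, u ∈ H → MemLp (D u) 2 m
  D1 : ∀ ⦃u : X → ℝ⦄, u ∈ H → ∀ᵐ x ∂m, 0 ≤ D u x
  D2 : ∀ ⦃u v : X → ℝ⦄, u ∈ H → v ∈ H → ∀ᵐ x ∂m, D (u + v) x ≤ D u x + D v x
  D3 : ∀ (c : ℝ) ⦃u : X → ℝ⦄, u ∈ H → ∀ᵐ x ∂m, D (c • u) x = |c| * D u x
  D4 : ∀ ⦃u v : X → ℝ⦄, u ∈ H → v ∈ H → ∀ᵐ x ∂m,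
      D (u ⊔ v) x = if v x < u x then D u x else D v x

variable {m : Measure X}

/-- Square of the `H`-norm: `‖u‖_H² = ‖u‖²_{L²} + ‖Du‖²_{L²}`. -/
noncomputable def normHsq (S : Setting X m) (u : X → ℝ) : ℝ :=
  ∫ x, (u x) ^ 2 ∂m + ∫ x, (S.D u x) ^ 2 ∂m

/-- Sobolev functions vanishing (m-a.e.) outside `Ω`. -/
def H0 (S : Setting X m) (Ω : Set X) : Set (X → ℝ) :=
  {u | u ∈ S.H ∧ ∀ᵐ x ∂m, x ∉ Ω → u x = 0}

/-- The functional `F^{a,f}(u) = ½∫|Du|² + (a/2)∫u² − ∫ f u`. -/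
noncomputable def F (S : Setting X m) (a : ℝ) (f : X → ℝ) (u : X → ℝ) : ℝ :=
  (1 / 2) * ∫ x, (S.D u x) ^ 2 ∂m + (a / 2) * ∫ x, (u x) ^ 2 ∂m - ∫ x, f x * u x ∂m

/-- `w` is a minimizer of `F^{a,f}` over `H₀(Ω)`. -/
def IsMinimizer (S : Setting X m) (Ω : Set X) (a : ℝ) (f : X → ℝ) (w : X → ℝ) : Prop :=
  w ∈ H0 S Ω ∧ ∀ u ∈ H0 S Ω, F S a f w ≤ F S a f u

/-- (ℋ2): the inclusion `H ↪ L²` is compact. -/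
def CompactEmbedding (S : Setting X m) : Prop :=
  ∀ u : ℕ → X → ℝ, (∀ n, u n ∈ S.H) → (∃ C : ℝ, ∀ n, normHsq S (u n) ≤ C) →
    ∃ (φ : ℕ → ℕ) (v : X → ℝ), StrictMono φ ∧ v ∈ S.H ∧
      Tendsto (fun k => ∫ x, (u (φ k) x - v x) ^ 2 ∂m) atTop (nhds 0)

/-- (ℋ3): lower semicontinuity of the gradient energy along `L²`-convergent
`H`-bounded sequences, whose limit moreover belongs to `H`. -/
def GradLSC (S : Setting X m) : Prop :=
  ∀ (u : ℕ → X → ℝ) (v : X → ℝ), (∀ n, u n ∈ S.H) →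
    (∃ C : ℝ, ∀ n, normHsq S (u n) ≤ C) →
    Tendsto (fun n => ∫ x, (u n x - v x) ^ 2 ∂m) atTop (nhds 0) →
    v ∈ S.H ∧ ∫ x, (S.D v x) ^ 2 ∂m ≤ liminf (fun n => ∫ x, (S.D (u n) x) ^ 2 ∂m) atTop

/-- Energy sets: Borel sets coinciding up to an `m`-null set with `{w_Ω > 0}`. -/
def IsEnergySet (S : Setting X m) (Ω : Set X) : Prop :=
  MeasurableSet Ω ∧ ∃ w, IsMinimizer S Ω 1 (fun _ => 1) w ∧ m (Ω \ {x | 0 < w x}) = 0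

/-! Put `p = w ⊓ W` and `q = w ⊔ W`. By (D4) the lattice operations only redistribute the
gradient energy and the `L²` mass between `w, W` and `p, q`, while `(g - f)(w - W)⁺ ≥ 0`
compares the linear terms; hence `F^f(p) + F^g(q) ≤ F^f(w) + F^g(W) ≤ F^f(w) + F^g(q)`, using that
`W` minimizes `F^g`. So `F^f(p) ≤ F^f(w)`. For `a > 0` the functional `F^f` is uniformly convex:
at the midpoint of `u, v` it lies `a/8 · ‖u - v‖²` below the average of its values. Therefore a
minimizer of `F^f` is the only point of `H₀(Ω)` where `F^f` is that small, so `p = w` a.e., that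
is `w ≤ W` a.e. -/

namespace Setting

variable (S : Setting X m) {u v : X → ℝ}

theorem D_inf (hu : u ∈ S.H) (hv : v ∈ S.H) :
    ∀ᵐ x ∂m, S.D (u ⊓ v) x = if u x < v x then S.D u x else S.D v x := by
  have hneg : u ⊓ v = (-1 : ℝ) • ((-1 : ℝ) • u ⊔ (-1 : ℝ) • v) := by
    simp only [neg_smul, one_smul, ← neg_inf, neg_neg]
  have hnu := S.smul_mem (-1) hu
  have hnv := S.smul_mem (-1) hv
  filter_upwards [S.D3 (-1) (S.sup_mem hnu hnv), S.D4 hnu hnv, S.D3 (-1) hu, S.D3 (-1) hv]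
    with x hD3 hD4 hDu hDv
  rw [hneg, hD3, hD4]
  simp only [Pi.smul_apply, smul_eq_mul, neg_one_mul, neg_lt_neg_iff] at hDu hDv ⊢
  rw [hDu, hDv]
  simp only [abs_neg, abs_one, one_mul]

theorem D_inf_sq_add_D_sup_sq (hu : u ∈ S.H) (hv : v ∈ S.H) :
    ∀ᵐ x ∂m, S.D (u ⊓ v) x ^ 2 + S.D (u ⊔ v) x ^ 2 = S.D u x ^ 2 + S.D v x ^ 2 := by
  have hvu := S.D4 hv hu
  rw [sup_comm v u] at hvu
  filter_upwards [S.D_inf hu hv, S.D4 hu hv, hvu] with x hinf hsup hsup'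
  rcases lt_trichotomy (u x) (v x) with h | h | h
  · rw [hinf, hsup, if_pos h, if_neg h.not_gt]
  · -- on `{u = v}` both expressions for `D (u ⊔ v)` apply, so `D u = D v` there
    have hDv : S.D (u ⊔ v) x = S.D v x := by rw [hsup, if_neg h.le.not_gt]
    have hDu : S.D (u ⊔ v) x = S.D u x := by rw [hsup', if_neg h.ge.not_gt]
    rw [hinf, if_neg h.ge.not_gt, hDv, ← hDu, hDv]
  · rw [hinf, hsup, if_neg h.not_gt, if_pos h, add_comm]

theorem D_midpoint_sq_le (hu : u ∈ S.H) (hv : v ∈ S.H) :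
    ∀ᵐ x ∂m, S.D ((1 / 2 : ℝ) • (u + v)) x ^ 2 ≤ S.D u x ^ 2 / 2 + S.D v x ^ 2 / 2 := by
  filter_upwards [S.D3 (1 / 2) (S.add_mem hu hv), S.D2 hu hv, S.D1 (S.add_mem hu hv)]
    with x hsmul hadd hnonneg
  rw [hsmul, abs_of_pos one_half_pos]
  calc (1 / 2 * S.D (u + v) x) ^ 2 ≤ (1 / 2 * (S.D u x + S.D v x)) ^ 2 := by gcongr
    _ ≤ S.D u x ^ 2 / 2 + S.D v x ^ 2 / 2 := by nlinarith [sq_nonneg (S.D u x - S.D v x)]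

end Setting

section H0

variable {S : Setting X m} {Ω : Set X} {u v : X → ℝ}

theorem add_mem_H0 (hu : u ∈ H0 S Ω) (hv : v ∈ H0 S Ω) : u + v ∈ H0 S Ω := by
  refine ⟨S.add_mem hu.1 hv.1, ?_⟩
  filter_upwards [hu.2, hv.2] with x hux hvx hx
  simp [hux hx, hvx hx]

theorem smul_mem_H0 (c : ℝ) (hu : u ∈ H0 S Ω) : c • u ∈ H0 S Ω := by
  refine ⟨S.smul_mem c hu.1, ?_⟩
  filter_upwards [hu.2] with x hux hx
  simp [hux hx]

theorem inf_mem_H0 (hu : u ∈ H0 S Ω) (hv : v ∈ H0 S Ω) : u ⊓ v ∈ H0 S Ω := by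
  refine ⟨S.inf_mem hu.1 hv.1, ?_⟩
  filter_upwards [hu.2, hv.2] with x hux hvx hx
  simp [hux hx, hvx hx]

theorem sup_mem_H0 (hu : u ∈ H0 S Ω) (hv : v ∈ H0 S Ω) : u ⊔ v ∈ H0 S Ω := by
  refine ⟨S.sup_mem hu.1 hv.1, ?_⟩
  filter_upwards [hu.2, hv.2] with x hux hvx hx
  simp [hux hx, hvx hx]

end H0

section Functional

variable {S : Setting X m} {a : ℝ} {f g u v : X → ℝ}

theorem F_inf_add_F_sup_le (hf : MemLp f 2 m) (hg : MemLp g 2 m) (hfg : ∀ᵐ x ∂m, f x ≤ g x)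
    (hu : u ∈ S.H) (hv : v ∈ S.H) :
    F S a f (u ⊓ v) + F S a g (u ⊔ v) ≤ F S a f u + F S a g v := by
  have hinf := S.inf_mem hu hv
  have hsup := S.sup_mem hu hv
  have hD : ∫ x, S.D (u ⊓ v) x ^ 2 ∂m + ∫ x, S.D (u ⊔ v) x ^ 2 ∂m
      = ∫ x, S.D u x ^ 2 ∂m + ∫ x, S.D v x ^ 2 ∂m := by
    rw [← integral_add (S.gradL2 hinf).integrable_sq (S.gradL2 hsup).integrable_sq,
      ← integral_add (S.gradL2 hu).integrable_sq (S.gradL2 hv).integrable_sq]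
    exact integral_congr_ae (S.D_inf_sq_add_D_sup_sq hu hv)
  have hsq : ∫ x, (u ⊓ v) x ^ 2 ∂m + ∫ x, (u ⊔ v) x ^ 2 ∂m
      = ∫ x, u x ^ 2 ∂m + ∫ x, v x ^ 2 ∂m := by
    rw [← integral_add (S.memL2 hinf).integrable_sq (S.memL2 hsup).integrable_sq,
      ← integral_add (S.memL2 hu).integrable_sq (S.memL2 hv).integrable_sq]
    refine integral_congr_ae (Eventually.of_forall fun x => ?_)
    rcases le_total (u x) (v x) with h | h
    · simp only [Pi.inf_apply, Pi.sup_apply, inf_of_le_left h, sup_of_le_right h]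
    · simp only [Pi.inf_apply, Pi.sup_apply, inf_of_le_right h, sup_of_le_left h, add_comm]
  have hlin : ∫ x, f x * u x ∂m + ∫ x, g x * v x ∂m
      ≤ ∫ x, f x * (u ⊓ v) x ∂m + ∫ x, g x * (u ⊔ v) x ∂m := by
    have hfu : Integrable (fun x => f x * u x) m := hf.integrable_mul (S.memL2 hu)
    have hgv : Integrable (fun x => g x * v x) m := hg.integrable_mul (S.memL2 hv)
    have hfinf : Integrable (fun x => f x * (u ⊓ v) x) m := hf.integrable_mul (S.memL2 hinf)
    have hgsup : Integrable (fun x => g x * (u ⊔ v) x) m := hg.integrable_mul (S.memL2 hsup)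
    rw [← integral_add hfu hgv, ← integral_add hfinf hgsup]
    refine integral_mono_ae (hfu.add hgv) (hfinf.add hgsup) ?_
    filter_upwards [hfg] with x hfgx
    rcases le_total (u x) (v x) with h | h
    · simp only [Pi.inf_apply, Pi.sup_apply, inf_of_le_left h, sup_of_le_right h, le_refl]
    · simp only [Pi.inf_apply, Pi.sup_apply, inf_of_le_right h, sup_of_le_left h]
      linarith [mul_le_mul_of_nonneg_right hfgx (sub_nonneg.2 h)]
  unfold F
  linear_combination (1 / 2) * hD + (a / 2) * hsq + hlin

theorem F_midpoint_le (hf : MemLp f 2 m) (hu : u ∈ S.H) (hv : v ∈ S.H) :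
    F S a f ((1 / 2 : ℝ) • (u + v))
      ≤ F S a f u / 2 + F S a f v / 2 - a / 8 * ∫ x, (u x - v x) ^ 2 ∂m := by
  have hz := S.smul_mem (1 / 2) (S.add_mem hu hv)
  have hDu := (S.gradL2 hu).integrable_sq
  have hDv := (S.gradL2 hv).integrable_sq
  have hu2 := (S.memL2 hu).integrable_sq
  have hv2 := (S.memL2 hv).integrable_sq
  have hfu : Integrable (fun x => f x * u x) m := hf.integrable_mul (S.memL2 hu)
  have hfv : Integrable (fun x => f x * v x) m := hf.integrable_mul (S.memL2 hv)
  have hD : ∫ x, S.D ((1 / 2 : ℝ) • (u + v)) x ^ 2 ∂m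
      ≤ (∫ x, S.D u x ^ 2 ∂m) / 2 + (∫ x, S.D v x ^ 2 ∂m) / 2 := by
    calc ∫ x, S.D ((1 / 2 : ℝ) • (u + v)) x ^ 2 ∂m
        ≤ ∫ x, (S.D u x ^ 2 / 2 + S.D v x ^ 2 / 2) ∂m :=
          integral_mono_ae (S.gradL2 hz).integrable_sq ((hDu.div_const 2).add (hDv.div_const 2))
            (S.D_midpoint_sq_le hu hv)
      _ = _ := by rw [integral_add (hDu.div_const 2) (hDv.div_const 2), integral_div, integral_div]
  have hsq : ∫ x, ((1 / 2 : ℝ) • (u + v)) x ^ 2 ∂m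
      = (∫ x, u x ^ 2 ∂m) / 2 + (∫ x, v x ^ 2 ∂m) / 2 - (∫ x, (u x - v x) ^ 2 ∂m) / 4 := by
    have huv : Integrable (fun x => (u x - v x) ^ 2) m :=
      ((S.memL2 hu).sub (S.memL2 hv)).integrable_sq
    have hpt : ∀ x, ((1 / 2 : ℝ) • (u + v)) x ^ 2
        = u x ^ 2 / 2 + v x ^ 2 / 2 - (u x - v x) ^ 2 / 4 := fun x => by
      simp only [Pi.smul_apply, Pi.add_apply, smul_eq_mul]
      ring
    rw [integral_congr_ae (Eventually.of_forall hpt),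
      integral_sub (f := fun x => u x ^ 2 / 2 + v x ^ 2 / 2)
        ((hu2.div_const 2).add (hv2.div_const 2)) (huv.div_const 4),
      integral_add (hu2.div_const 2) (hv2.div_const 2), integral_div, integral_div, integral_div]
  have hlin : ∫ x, f x * ((1 / 2 : ℝ) • (u + v)) x ∂m
      = (∫ x, f x * u x ∂m) / 2 + (∫ x, f x * v x ∂m) / 2 := by
    have hpt : ∀ x, f x * ((1 / 2 : ℝ) • (u + v)) x = f x * u x / 2 + f x * v x / 2 := fun x => by
      simp only [Pi.smul_apply, Pi.add_apply, smul_eq_mul]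
      ring
    rw [integral_congr_ae (Eventually.of_forall hpt),
      integral_add (hfu.div_const 2) (hfv.div_const 2), integral_div, integral_div]
  unfold F
  linear_combination (1 / 2) * hD + (a / 2) * hsq - hlin

theorem IsMinimizer.ae_eq_of_F_le {Ω : Set X} {w : X → ℝ} (ha : 0 < a) (hf : MemLp f 2 m)
    (hw : IsMinimizer S Ω a f w) (hv : v ∈ H0 S Ω) (hvw : F S a f v ≤ F S a f w) :
    v =ᵐ[m] w := by
  have hmid := hw.2 _ (smul_mem_H0 (1 / 2) (add_mem_H0 hw.1 hv))
  have hconv := F_midpoint_le (a := a) hf hw.1.1 hv.1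
  have hdist : ∫ x, (w x - v x) ^ 2 ∂m = 0 := by
    refine le_antisymm ?_ (integral_nonneg fun x => sq_nonneg _)
    exact nonpos_of_mul_nonpos_left (by linarith) (by positivity : 0 < a / 8)
  have hsq := (integral_eq_zero_iff_of_nonneg (fun x => sq_nonneg _)
    ((S.memL2 hw.1.1).sub (S.memL2 hv.1)).integrable_sq).1 hdist
  filter_upwards [hsq] with x hx
  exact (sub_eq_zero.1 (pow_eq_zero_iff two_ne_zero |>.1 hx)).symm

end Functional

theorem statement_8_general {X : Type*} [MeasurableSpace X] {m : Measure X}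
    (S : Setting X m) {Ω : Set X} {a : ℝ} (ha : 0 < a)
    {f g : X → ℝ} (hf : MemLp f 2 m) (hg : MemLp g 2 m)
    (hfg : ∀ᵐ x ∂m, f x ≤ g x)
    {w W : X → ℝ} (hw : IsMinimizer S Ω a f w) (hW : IsMinimizer S Ω a g W) :
    ∀ᵐ x ∂m, w x ≤ W x := by
  have hinf := inf_mem_H0 hw.1 hW.1
  have hle : F S a f (w ⊓ W) ≤ F S a f w := by
    have hlattice := F_inf_add_F_sup_le (a := a) hf hg hfg hw.1.1 hW.1.1
    have hWmin := hW.2 _ (sup_mem_H0 hw.1 hW.1)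
    linarith
  filter_upwards [hw.ae_eq_of_F_le ha hf hinf hle] with x hx
  exact hx ▸ inf_le_right

/-- monotonicity in the right-hand side:
if `0 ≤ f ≤ g` then `w_{Ω,a,f} ≤ w_{Ω,a,g}` m-a.e. -/
theorem statement_8 {X : Type*} [MeasurableSpace X] {m : Measure X} [IsFiniteMeasure m]
    (S : Setting X m) {Ω : Set X} (hΩ : MeasurableSet Ω) {a : ℝ} (ha : 0 < a)
    {f g : X → ℝ} (hf : MemLp f 2 m) (hg : MemLp g 2 m)
    (hf0 : ∀ᵐ x ∂m, 0 ≤ f x) (hfg : ∀ᵐ x ∂m, f x ≤ g x)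
    {w W : X → ℝ} (hw : IsMinimizer S Ω a f w) (hW : IsMinimizer S Ω a g W) :
    ∀ᵐ x ∂m, w x ≤ W x :=
  statement_8_general S ha hf hg hfg hw hW

end AbsSob
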